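/- Under Assumption 2 (jointly independent super-uniform null pairs independent of alternatives, with P_i ⊥ X_i for nulls), the IHWc procedure with censoring level τ ∈ (0,1) and cross-weights satisfying Σ_i W_i = m a.s. controls the FDR at level α. -/

import Mathlib

/-!
For a null `i`, let `Zᵢ` be the data with `Pᵢ` replaced by `0`. The weights see p-values only
through their censored values, and a rejected `Pᵢ` is at most `τ`, so on `{i rejected}`
replacing `Pᵢ` by `0` changes neither the weights nor, by the step-up structure, the number of
rejections `R`. Hence `1{i rejected} / (R ∨ 1) ≤ 1{Pᵢ ≤ tᵢ(Zᵢ)} / (R(Zᵢ) ∨ 1)` with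
`tᵢ(Zᵢ) ≤ α Wᵢ R(Zᵢ) / m` the threshold computed on `Zᵢ`. By Assumption 2, `Pᵢ` is independent
of `Zᵢ` and super-uniform, so the expectation of the right side is at most `E[α Wᵢ / m]`; here
`Wᵢ` really is a function of `Zᵢ`, because the fold of `i` masks `Pᵢ`. Summing over the nulls
and using `∑ Wᵢ = m` gives `FDR ≤ α`.
-/

open MeasureTheory ProbabilityTheory Classical

/-- Censoring of p-values at level `τ`: p-values `≤ τ` are replaced by `0`. -/
noncomputable def censor (m : ℕ) (τ : ℝ) (P : Fin m → ℝ) : Fin m → ℝ :=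
  fun j => if τ < P j then P j else 0

/-- The number of rejections of the censored weighted BH procedure (IHWc) at level `α`
with censoring level `τ`. -/
noncomputable def cBHRejCount (m : ℕ) (P W : Fin m → ℝ) (α τ : ℝ) : ℕ :=
  sSup {k : ℕ |
    k ≤ (Finset.univ.filter (fun i : Fin m => P i ≤ min (α * W i * k / m) τ)).card}

/-- Hypothesis `i` is rejected by IHWc. -/
noncomputable def cBHRejects (m : ℕ) (P W : Fin m → ℝ) (α τ : ℝ) (i : Fin m) : Prop :=
  P i ≤ min (α * W i * (cBHRejCount m P W α τ : ℝ) / m) τ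

open Finset Function
open scoped ENNReal

section Probability

variable {Ω β γ δ : Type*} [MeasurableSpace Ω] [MeasurableSpace β] [MeasurableSpace γ]
  [MeasurableSpace δ] {μ : Measure Ω}

lemma ProbabilityTheory.IndepFun.prodMk_right_of_indepFun_prodMk [IsProbabilityMeasure μ]
    {f : Ω → β} {g : Ω → γ} {h : Ω → δ} (hf : Measurable f) (hg : Measurable g)
    (hh : Measurable h) (hfg : IndepFun f g μ) (hfgh : IndepFun (fun ω => (f ω, g ω)) h μ) :
    IndepFun f (fun ω => (g ω, h ω)) μ := by
  have hgh : IndepFun g h μ := hfgh.comp measurable_snd measurable_id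
  rw [indepFun_iff_map_prod_eq_prod_map_map hf.aemeasurable (hg.prodMk hh).aemeasurable,
    (indepFun_iff_map_prod_eq_prod_map_map hg.aemeasurable hh.aemeasurable).mp hgh]
  have hassoc : μ.map (fun ω => (f ω, (g ω, h ω)))
      = (μ.map (fun ω => ((f ω, g ω), h ω))).map MeasurableEquiv.prodAssoc := by
    rw [Measure.map_map MeasurableEquiv.prodAssoc.measurable ((hf.prodMk hg).prodMk hh)]
    rfl
  rw [hassoc, (indepFun_iff_map_prod_eq_prod_map_map (hf.prodMk hg).aemeasurable
      hh.aemeasurable).mp hfgh,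
    (indepFun_iff_map_prod_eq_prod_map_map hf.aemeasurable hg.aemeasurable).mp hfg]
  have : IsProbabilityMeasure (μ.map f) := Measure.isProbabilityMeasure_map hf.aemeasurable
  have : IsProbabilityMeasure (μ.map g) := Measure.isProbabilityMeasure_map hg.aemeasurable
  have : IsProbabilityMeasure (μ.map h) := Measure.isProbabilityMeasure_map hh.aemeasurable
  exact (measurePreserving_prodAssoc _ _ _).map_eq

lemma measure_le_le_ofReal_of_le_one {p : Ω → ℝ}
    (hp : ∀ t ∈ Set.Icc (0 : ℝ) 1, μ {ω | p ω ≤ t} ≤ ENNReal.ofReal t) {t : ℝ} (ht : t ≤ 1) :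
    μ {ω | p ω ≤ t} ≤ ENNReal.ofReal t := by
  rcases le_total 0 t with h0 | h0
  · exact hp t ⟨h0, ht⟩
  · calc μ {ω | p ω ≤ t} ≤ μ {ω | p ω ≤ 0} := measure_mono fun ω hω => le_trans hω h0
      _ ≤ ENNReal.ofReal 0 := hp 0 ⟨le_rfl, zero_le_one⟩
      _ = ENNReal.ofReal t := by rw [ENNReal.ofReal_zero, ENNReal.ofReal_of_nonpos h0]

/-- Conditionally on `Z`, the event `{p ≤ t Z}` has probability at most `t Z`. -/
lemma lintegral_ite_le_of_indepFun [IsProbabilityMeasure μ] {p : Ω → ℝ} {Z : Ω → γ}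
    {t : γ → ℝ} {h : γ → ℝ≥0∞} (hp : Measurable p) (hZ : Measurable Z) (ht : Measurable t)
    (hh : Measurable h) (hpZ : IndepFun p Z μ)
    (hsuper : ∀ z, μ {ω | p ω ≤ t z} ≤ ENNReal.ofReal (t z)) :
    ∫⁻ ω, (if p ω ≤ t (Z ω) then h (Z ω) else 0) ∂μ
      ≤ ∫⁻ ω, ENNReal.ofReal (t (Z ω)) * h (Z ω) ∂μ := by
  set F : ℝ × γ → ℝ≥0∞ := fun q => if q.1 ≤ t q.2 then h q.2 else 0
  have hF : Measurable F :=
    Measurable.ite (measurableSet_le measurable_fst (ht.comp measurable_snd))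
      (hh.comp measurable_snd) measurable_const
  have hinner : ∀ z, ∫⁻ x, F (x, z) ∂(μ.map p) = μ {ω | p ω ≤ t z} * h z := by
    intro z
    have : (fun x => F (x, z)) = (Set.Iic (t z)).indicator fun _ => h z := by
      funext x; simp [F, Set.indicator_apply]
    rw [this, lintegral_indicator_const measurableSet_Iic, Measure.map_apply hp measurableSet_Iic,
      mul_comm]
    rfl
  calc ∫⁻ ω, (if p ω ≤ t (Z ω) then h (Z ω) else 0) ∂μ
      = ∫⁻ q, F q ∂((μ.map p).prod (μ.map Z)) := by
        rw [← (indepFun_iff_map_prod_eq_prod_map_map hp.aemeasurable hZ.aemeasurable).mp hpZ,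
          lintegral_map hF (hp.prodMk hZ)]
    _ = ∫⁻ z, μ {ω | p ω ≤ t z} * h z ∂(μ.map Z) := by
        rw [lintegral_prod_symm' F hF]
        simp_rw [hinner]
    _ ≤ ∫⁻ z, ENNReal.ofReal (t z) * h z ∂(μ.map Z) :=
        lintegral_mono fun z => mul_le_mul_left (hsuper z) _
    _ = ∫⁻ ω, ENNReal.ofReal (t (Z ω)) * h (Z ω) ∂μ :=
        lintegral_map (ENNReal.measurable_ofReal.comp ht |>.mul hh) hZ

lemma ofReal_card_filter_div {ι : Type*} (s : Finset ι) (q : ι → Prop) [DecidablePred q]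
    (d : ℕ) :
    ENNReal.ofReal (#(s.filter q) / d)
      = ∑ i ∈ s, if q i then ENNReal.ofReal (d : ℝ)⁻¹ else 0 := by
  rw [sum_ite, sum_const_zero, add_zero, sum_const, nsmul_eq_mul, div_eq_mul_inv,
    ENNReal.ofReal_mul (Nat.cast_nonneg _), ENNReal.ofReal_natCast]

lemma integral_le_of_lintegral_ofReal_le {f : Ω → ℝ} {c : ℝ} (hf : ∀ ω, 0 ≤ f ω) (hc : 0 ≤ c)
    (h : ∫⁻ ω, ENNReal.ofReal (f ω) ∂μ ≤ ENNReal.ofReal c) : ∫ ω, f ω ∂μ ≤ c := by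
  by_cases hfm : AEStronglyMeasurable f μ
  · rw [integral_eq_lintegral_of_nonneg_ae (Filter.Eventually.of_forall hf) hfm]
    exact ENNReal.toReal_le_of_le_ofReal hc h
  · rw [integral_non_aestronglyMeasurable hfm]
    exact hc

lemma sum_lintegral_ofReal_weight_le [IsProbabilityMeasure μ] {m : ℕ} {W : Fin m → Ω → ℝ}
    (hm : 0 < m) (hW : ∀ i, Measurable (W i)) (hWnonneg : ∀ i ω, 0 ≤ W i ω)
    (hWsum : ∀ᵐ ω ∂μ, ∑ i, W i ω = m) {α : ℝ} (hα : 0 ≤ α) (s : Finset (Fin m)) :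
    ∑ i ∈ s, ∫⁻ ω, ENNReal.ofReal (α * W i ω / m) ∂μ ≤ ENNReal.ofReal α := by
  have hnonneg : ∀ i ω, 0 ≤ α * W i ω / m := fun i ω => by have := hWnonneg i ω; positivity
  calc ∑ i ∈ s, ∫⁻ ω, ENNReal.ofReal (α * W i ω / m) ∂μ
      ≤ ∑ i, ∫⁻ ω, ENNReal.ofReal (α * W i ω / m) ∂μ :=
        sum_le_sum_of_subset (subset_univ s)
    _ = ∫⁻ ω, ∑ i, ENNReal.ofReal (α * W i ω / m) ∂μ :=
        (lintegral_finsetSum _ fun i _ =>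
          ENNReal.measurable_ofReal.comp ((measurable_const.mul (hW i)).div_const _)).symm
    _ = ∫⁻ _, ENNReal.ofReal α ∂μ := by
        refine lintegral_congr_ae (hWsum.mono fun ω hω => ?_)
        dsimp only
        rw [← ENNReal.ofReal_sum_of_nonneg fun i _ => hnonneg i ω, ← sum_div, ← mul_sum, hω,
          mul_div_cancel_right₀ _ (by exact_mod_cast hm.ne')]
    _ = ENNReal.ofReal α := by simp

end Probability

namespace IHWc

variable {m : ℕ}

section CensoredBH

variable {p W : Fin m → ℝ} {α τ : ℝ}

noncomputable def cBHPassing (m : ℕ) (p W : Fin m → ℝ) (α τ : ℝ) (k : ℕ) : Finset (Fin m) :=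
  univ.filter fun i => p i ≤ min (α * W i * k / m) τ

noncomputable def cBHThreshold (m : ℕ) (p W : Fin m → ℝ) (α τ : ℝ) (i : Fin m) : ℝ :=
  min (α * W i * cBHRejCount m p W α τ / m) τ

lemma bddAbove_setOf_le_card_cBHPassing :
    BddAbove {k | k ≤ #(cBHPassing m p W α τ k)} :=
  ⟨m, fun _ hk => hk.trans (card_le_univ _ |>.trans_eq (Fintype.card_fin m))⟩

lemma le_cBHRejCount {k : ℕ} (hk : k ≤ #(cBHPassing m p W α τ k)) :
    k ≤ cBHRejCount m p W α τ :=
  le_csSup bddAbove_setOf_le_card_cBHPassing hk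

lemma cBHRejCount_le_card :
    cBHRejCount m p W α τ ≤ #(cBHPassing m p W α τ (cBHRejCount m p W α τ)) :=
  Nat.sSup_mem (s := {k | k ≤ #(cBHPassing m p W α τ k)}) ⟨0, Nat.zero_le _⟩
    bddAbove_setOf_le_card_cBHPassing

lemma cBHRejCount_le : cBHRejCount m p W α τ ≤ m :=
  cBHRejCount_le_card.trans (card_le_univ _ |>.trans_eq (Fintype.card_fin m))

lemma cBHRejCount_eq_findGreatest :
    cBHRejCount m p W α τ = Nat.findGreatest (fun k => k ≤ #(cBHPassing m p W α τ k)) m :=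
  le_antisymm (Nat.le_findGreatest cBHRejCount_le cBHRejCount_le_card)
    (le_cBHRejCount (Nat.findGreatest_spec (P := fun k => k ≤ #(cBHPassing m p W α τ k))
      (Nat.zero_le m) (Nat.zero_le _)))

lemma cBHThreshold_nonneg (hα : 0 ≤ α) (hτ : 0 ≤ τ) {i : Fin m} (hWi : 0 ≤ W i) :
    0 ≤ cBHThreshold m p W α τ i :=
  le_min (by positivity) hτ

/-- At every level `k` above the count, both p-value vectors pass at `i`, so the passing sets
agree; the count is therefore attained, and maximal, for both. -/
lemma cBHRejCount_update_of_rejects (hα : 0 ≤ α) {i : Fin m} (hWi : 0 ≤ W i)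
    (hi : cBHRejects m p W α τ i) {v : ℝ} (hv : v ≤ cBHThreshold m p W α τ i) :
    cBHRejCount m (update p i v) W α τ = cBHRejCount m p W α τ := by
  set R := cBHRejCount m p W α τ
  have hmono : ∀ k, R ≤ k → cBHThreshold m p W α τ i ≤ min (α * W i * k / m) τ := by
    intro k hk
    unfold cBHThreshold
    gcongr
  have hsame : ∀ k, R ≤ k → cBHPassing m (update p i v) W α τ k = cBHPassing m p W α τ k := by
    intro k hk
    refine filter_congr fun j _ => ?_
    rcases eq_or_ne j i with rfl | hj
    · simp only [update_self]
      exact iff_of_true (hv.trans (hmono k hk)) (hi.trans (hmono k hk))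
    · rw [update_of_ne hj]
  have hR : R ≤ cBHRejCount m (update p i v) W α τ :=
    le_cBHRejCount ((hsame R le_rfl).symm ▸ cBHRejCount_le_card)
  exact le_antisymm (le_cBHRejCount ((hsame _ hR) ▸ cBHRejCount_le_card)) hR

lemma ofReal_cBHThreshold_mul_le (hα : 0 ≤ α) {i : Fin m} (hWi : 0 ≤ W i) :
    ENNReal.ofReal (cBHThreshold m p W α τ i)
        * ENNReal.ofReal ((max (cBHRejCount m p W α τ) 1 : ℕ) : ℝ)⁻¹
      ≤ ENNReal.ofReal (α * W i / m) := by
  set R := cBHRejCount m p W α τ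
  have hd : (0 : ℝ) < (max R 1 : ℕ) := by positivity
  rw [← ENNReal.ofReal_mul' (by positivity)]
  refine ENNReal.ofReal_le_ofReal ?_
  calc cBHThreshold m p W α τ i * ((max R 1 : ℕ) : ℝ)⁻¹
      ≤ α * W i * R / m * ((max R 1 : ℕ) : ℝ)⁻¹ := by
        gcongr
        exact min_le_left _ _
    _ = α * W i / m * (R / (max R 1 : ℕ)) := by ring
    _ ≤ α * W i / m * 1 := by
        gcongr
        exact div_le_one_of_le₀ (by exact_mod_cast le_max_left R 1) hd.le
    _ = α * W i / m := mul_one _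

variable {γ : Type*} [MeasurableSpace γ] {p W : γ → Fin m → ℝ}

lemma measurable_card_cBHPassing (hp : Measurable p) (hW : Measurable W) (k : ℕ) :
    Measurable fun z => #(cBHPassing m (p z) (W z) α τ k) := by
  simp_rw [cBHPassing, card_filter]
  refine Finset.measurable_sum _ fun i _ => Measurable.ite ?_ measurable_const measurable_const
  exact measurableSet_le hp.eval
    (((measurable_const.mul hW.eval).mul measurable_const).div_const _ |>.min measurable_const)

lemma measurable_cBHRejCount (hp : Measurable p) (hW : Measurable W) :
    Measurable fun z => cBHRejCount m (p z) (W z) α τ := by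
  simp_rw [cBHRejCount_eq_findGreatest]
  exact measurable_findGreatest fun k _ =>
    measurable_card_cBHPassing hp hW k measurableSet_Ici

lemma measurable_cBHThreshold (hp : Measurable p) (hW : Measurable W) (i : Fin m) :
    Measurable fun z => cBHThreshold m (p z) (W z) α τ i :=
  ((measurable_const.mul hW.eval).mul
    (measurable_from_top.comp (measurable_cBHRejCount hp hW))).div_const _ |>.min
      measurable_const

end CensoredBH

section CrossWeights

variable {K : ℕ} (I : Fin K → Finset (Fin m)) (fold : Fin m → Fin K)
  (w : Fin K → (Fin m → ℝ) × (Fin m → ℝ) → Fin m → ℝ) (α τ : ℝ)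

/-- The weights on data `z = (p, x)`: hypothesis `j` gets the weight learned on its fold
`fold j` from the censored p-values outside that fold and from all covariates. -/
noncomputable def crossWeights (z : (Fin m → ℝ) × (Fin m → ℝ)) : Fin m → ℝ :=
  fun j => w (fold j) (fun j' => if j' ∈ I (fold j) then 0 else censor m τ z.1 j', z.2) j

noncomputable def ihwcThreshold (i : Fin m) (z : (Fin m → ℝ) × (Fin m → ℝ)) : ℝ :=
  cBHThreshold m z.1 (crossWeights I fold w τ z) α τ i

noncomputable def ihwcInvCount (z : (Fin m → ℝ) × (Fin m → ℝ)) : ℝ≥0∞ :=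
  ENNReal.ofReal ((max (cBHRejCount m z.1 (crossWeights I fold w τ z) α τ) 1 : ℕ) : ℝ)⁻¹

variable {I fold w α τ} {p x : Fin m → ℝ} {i : Fin m}

lemma censor_update_zero (hτ : 0 ≤ τ) (hpi : p i ≤ τ) :
    censor m τ (update p i 0) = censor m τ p := by
  funext j
  rcases eq_or_ne j i with rfl | hj
  · simp [censor, hτ.not_gt, hpi.not_gt]
  · simp [censor, update_of_ne hj]

lemma crossWeights_update_zero (hτ : 0 ≤ τ) (hpi : p i ≤ τ) :
    crossWeights I fold w τ (update p i 0, x) = crossWeights I fold w τ (p, x) := by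
  unfold crossWeights
  dsimp only
  rw [censor_update_zero hτ hpi]

lemma crossWeights_update_self (hi : i ∈ I (fold i)) (v : ℝ) :
    crossWeights I fold w τ (update p i v, x) i = crossWeights I fold w τ (p, x) i := by
  simp only [crossWeights]
  congr 3
  funext j
  split_ifs with hj
  · rfl
  · simp [censor, update_of_ne (ne_of_mem_of_not_mem hi hj).symm]

lemma cBHRejCount_crossWeights_update_zero (hα : 0 ≤ α) (hτ : 0 ≤ τ)
    (hWi : 0 ≤ crossWeights I fold w τ (p, x) i)
    (hi : cBHRejects m p (crossWeights I fold w τ (p, x)) α τ i) :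
    cBHRejCount m (update p i 0) (crossWeights I fold w τ (update p i 0, x)) α τ
      = cBHRejCount m p (crossWeights I fold w τ (p, x)) α τ := by
  rw [crossWeights_update_zero hτ (hi.trans (min_le_right _ _))]
  exact cBHRejCount_update_of_rejects hα hWi hi (cBHThreshold_nonneg hα hτ hWi)

lemma ihwcThreshold_update_zero (hα : 0 ≤ α) (hτ : 0 ≤ τ)
    (hWi : 0 ≤ crossWeights I fold w τ (p, x) i)
    (hi : cBHRejects m p (crossWeights I fold w τ (p, x)) α τ i) :
    ihwcThreshold I fold w α τ i (update p i 0, x) = ihwcThreshold I fold w α τ i (p, x) := by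
  simp only [ihwcThreshold, cBHThreshold]
  rw [cBHRejCount_crossWeights_update_zero hα hτ hWi hi,
    crossWeights_update_zero hτ (hi.trans (min_le_right _ _))]

lemma ihwcInvCount_update_zero (hα : 0 ≤ α) (hτ : 0 ≤ τ)
    (hWi : 0 ≤ crossWeights I fold w τ (p, x) i)
    (hi : cBHRejects m p (crossWeights I fold w τ (p, x)) α τ i) :
    ihwcInvCount I fold w α τ (update p i 0, x) = ihwcInvCount I fold w α τ (p, x) := by
  simp only [ihwcInvCount]
  rw [cBHRejCount_crossWeights_update_zero hα hτ hWi hi]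

/-- A rejected `p i` stays below its threshold, and the count is unchanged, once `p i` is set
to `0`. -/
lemma ofReal_fdp_le_sum_update_zero (hα : 0 ≤ α) (hτ : 0 ≤ τ)
    (hW : ∀ j, 0 ≤ crossWeights I fold w τ (p, x) j) (s : Finset (Fin m)) :
    ENNReal.ofReal (#(s.filter (cBHRejects m p (crossWeights I fold w τ (p, x)) α τ))
        / ((max (cBHRejCount m p (crossWeights I fold w τ (p, x)) α τ) 1 : ℕ) : ℝ))
      ≤ ∑ i ∈ s, if p i ≤ ihwcThreshold I fold w α τ i (update p i 0, x)
          then ihwcInvCount I fold w α τ (update p i 0, x) else 0 := by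
  rw [ofReal_card_filter_div]
  gcongr with i
  by_cases hrej : cBHRejects m p (crossWeights I fold w τ (p, x)) α τ i
  · rw [if_pos hrej, ihwcThreshold_update_zero hα hτ (hW i) hrej,
      ihwcInvCount_update_zero hα hτ (hW i) hrej]
    exact (if_pos hrej).ge
  · rw [if_neg hrej]
    exact bot_le

lemma measurable_crossWeights (hw : ∀ l, Measurable (w l)) :
    Measurable (crossWeights I fold w τ) := by
  refine measurable_pi_lambda _ fun j => (measurable_pi_apply j).comp
    ((hw (fold j)).comp (Measurable.prodMk (measurable_pi_lambda _ fun j' => ?_) measurable_snd))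
  split_ifs
  · exact measurable_const
  · exact Measurable.ite (measurableSet_lt measurable_const measurable_fst.eval)
      measurable_fst.eval measurable_const

lemma measurable_ihwcThreshold (hw : ∀ l, Measurable (w l)) (i : Fin m) :
    Measurable (ihwcThreshold I fold w α τ i) :=
  measurable_cBHThreshold measurable_fst (measurable_crossWeights hw) i

lemma measurable_ihwcInvCount (hw : ∀ l, Measurable (w l)) :
    Measurable (ihwcInvCount I fold w α τ) :=
  ENNReal.measurable_ofReal.comp (measurable_from_top.comp
    ((measurable_cBHRejCount measurable_fst (measurable_crossWeights hw)).max
      measurable_const)).inv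

end CrossWeights

section LeaveOneOut

variable {H0 : Finset (Fin m)} {i : Fin m} (hi : i ∈ H0)

/-- Reassembles `(update p i 0, x)` from `x i`, the pairs `(p j, x j)` of the other nulls and
those of the alternatives. -/
noncomputable def updateZeroOfParts
    (q : ℝ × (({⟨i, hi⟩}ᶜ : Finset {j // j ∈ H0}) → ℝ × ℝ) × ({j // j ∉ H0} → ℝ × ℝ)) :
    (Fin m → ℝ) × (Fin m → ℝ) :=
  let pair : Fin m → ℝ × ℝ := fun j =>
    if h : j ∈ H0 then
      (if h' : ⟨j, h⟩ ∈ ({⟨i, hi⟩}ᶜ : Finset {j // j ∈ H0}) then q.2.1 ⟨⟨j, h⟩, h'⟩ else 0)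
    else q.2.2 ⟨j, h⟩
  (update (fun j => (pair j).1) i 0, update (fun j => (pair j).2) i q.1)

lemma measurable_updateZeroOfParts : Measurable (updateZeroOfParts hi) := by
  have hpair : ∀ j, Measurable fun q :
      ℝ × (({⟨i, hi⟩}ᶜ : Finset {j // j ∈ H0}) → ℝ × ℝ) × ({j // j ∉ H0} → ℝ × ℝ) =>
      if h : j ∈ H0 then
        (if h' : ⟨j, h⟩ ∈ ({⟨i, hi⟩}ᶜ : Finset {j // j ∈ H0}) then q.2.1 ⟨⟨j, h⟩, h'⟩ else 0)
      else q.2.2 ⟨j, h⟩ := by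
    intro j
    split_ifs
    · exact (measurable_pi_apply _).comp measurable_snd.fst
    · exact measurable_const
    · exact (measurable_pi_apply _).comp measurable_snd.snd
  exact (measurable_update'.comp ((measurable_pi_lambda _ fun j => (hpair j).fst).prodMk
      measurable_const)).prodMk
    (measurable_update'.comp ((measurable_pi_lambda _ fun j => (hpair j).snd).prodMk
      measurable_fst))

lemma updateZeroOfParts_apply (p x : Fin m → ℝ) :
    updateZeroOfParts hi (x i, fun j => (p j.1.1, x j.1.1), fun j => (p j.1, x j.1))
      = (update p i 0, x) := by
  have hpair : ∀ j ≠ i, (if h : j ∈ H0 then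
      (if h' : ⟨j, h⟩ ∈ ({⟨i, hi⟩}ᶜ : Finset {j // j ∈ H0}) then (p j, x j) else 0)
      else (p j, x j)) = (p j, x j) := by
    intro j hj
    split_ifs with h h'
    · rfl
    · exact absurd (by simpa [Subtype.ext_iff] using hj) h'
    · rfl
  refine Prod.ext (funext fun j => ?_) (funext fun j => ?_) <;>
    rcases eq_or_ne j i with rfl | hj <;>
    simp [updateZeroOfParts, update_of_ne, *]

variable {Ω : Type*} [MeasurableSpace Ω] {μ : Measure Ω} [IsProbabilityMeasure μ]
  {P X : Fin m → Ω → ℝ}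

lemma indepFun_parts_of_mem_null (hP : ∀ j, Measurable (P j)) (hX : ∀ j, Measurable (X j))
    (hnull : iIndepFun (fun (j : {j : Fin m // j ∈ H0}) (ω : Ω) => (P j ω, X j ω)) μ)
    (hnull_alt : IndepFun (fun ω => fun j : {j : Fin m // j ∈ H0} => (P j ω, X j ω))
      (fun ω => fun j : {j : Fin m // j ∉ H0} => (P j ω, X j ω)) μ)
    (hPX : IndepFun (P i) (X i) μ) :
    IndepFun (P i) (fun ω => (X i ω,
      (fun j : ({⟨i, hi⟩}ᶜ : Finset {j // j ∈ H0}) => (P j.1.1 ω, X j.1.1 ω)),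
      fun j : {j // j ∉ H0} => (P j.1 ω, X j.1 ω))) μ := by
  set i0 : {j : Fin m // j ∈ H0} := ⟨i, hi⟩
  have hpair : ∀ j, Measurable fun ω => (P j ω, X j ω) := fun j => (hP j).prodMk (hX j)
  have hothers : Measurable fun ω (j : ({i0}ᶜ : Finset _)) => (P j.1.1 ω, X j.1.1 ω) :=
    measurable_pi_lambda _ fun j => hpair j.1.1
  have halts : Measurable fun ω (j : {j // j ∉ H0}) => (P j.1 ω, X j.1 ω) :=
    measurable_pi_lambda _ fun j => hpair j.1
  have hi_others : IndepFun (fun ω => (P i ω, X i ω))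
      (fun ω (j : ({i0}ᶜ : Finset _)) => (P j.1.1 ω, X j.1.1 ω)) μ :=
    (hnull.indepFun_finset {i0} {i0}ᶜ disjoint_compl_right fun j => hpair j.1).comp
      (measurable_pi_apply (⟨i0, mem_singleton_self i0⟩ : ({i0} : Finset _))) measurable_id
  have hi_others_alts : IndepFun
      (fun ω => ((P i ω, X i ω), fun (j : ({i0}ᶜ : Finset _)) => (P j.1.1 ω, X j.1.1 ω)))
      (fun ω (j : {j // j ∉ H0}) => (P j.1 ω, X j.1 ω)) μ :=
    hnull_alt.comp ((measurable_pi_apply i0).prodMk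
      (measurable_pi_lambda _ fun j : ({i0}ᶜ : Finset _) => measurable_pi_apply j.1))
      measurable_id
  exact hPX.prodMk_right_of_indepFun_prodMk (hP i) (hX i) (hothers.prodMk halts)
    (hi_others.prodMk_right_of_indepFun_prodMk (hpair i) hothers halts hi_others_alts)

lemma indepFun_update_zero_of_mem_null (hi : i ∈ H0) (hP : ∀ j, Measurable (P j))
    (hX : ∀ j, Measurable (X j))
    (hnull : iIndepFun (fun (j : {j : Fin m // j ∈ H0}) (ω : Ω) => (P j ω, X j ω)) μ)
    (hnull_alt : IndepFun (fun ω => fun j : {j : Fin m // j ∈ H0} => (P j ω, X j ω))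
      (fun ω => fun j : {j : Fin m // j ∉ H0} => (P j ω, X j ω)) μ)
    (hPX : IndepFun (P i) (X i) μ) :
    IndepFun (P i) (fun ω => (update (fun j => P j ω) i 0, fun j => X j ω)) μ := by
  simp_rw [← updateZeroOfParts_apply hi]
  exact (indepFun_parts_of_mem_null hi hP hX hnull hnull_alt hPX).comp measurable_id
    (measurable_updateZeroOfParts hi)

end LeaveOneOut

variable {Ω : Type*} [MeasurableSpace Ω] {μ : Measure Ω}
  {K : ℕ} {I : Fin K → Finset (Fin m)} {fold : Fin m → Fin K}
  {w : Fin K → (Fin m → ℝ) × (Fin m → ℝ) → Fin m → ℝ} {α τ : ℝ} {P X : Fin m → Ω → ℝ}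
  {i : Fin m}

lemma measurable_update_zero (hP : ∀ j, Measurable (P j)) (hX : ∀ j, Measurable (X j))
    (i : Fin m) : Measurable fun ω => (update (fun j => P j ω) i 0, fun j => X j ω) :=
  (measurable_update'.comp ((measurable_pi_lambda _ hP).prodMk measurable_const)).prodMk
    (measurable_pi_lambda _ hX)

lemma lintegral_ofReal_fdp_le_sum_lintegral_update_zero (hP : ∀ j, Measurable (P j))
    (hX : ∀ j, Measurable (X j)) (hw : ∀ l, Measurable (w l)) (hα : 0 ≤ α) (hτ : 0 ≤ τ)
    (hW : ∀ j ω, 0 ≤ crossWeights I fold w τ (fun j => P j ω, fun j => X j ω) j)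
    (s : Finset (Fin m)) :
    ∫⁻ ω, ENNReal.ofReal
        (#(s.filter (cBHRejects m (fun j => P j ω)
          (crossWeights I fold w τ (fun j => P j ω, fun j => X j ω)) α τ))
        / ((max (cBHRejCount m (fun j => P j ω)
          (crossWeights I fold w τ (fun j => P j ω, fun j => X j ω)) α τ) 1 : ℕ) : ℝ)) ∂μ
      ≤ ∑ i ∈ s, ∫⁻ ω, (if P i ω
            ≤ ihwcThreshold I fold w α τ i (update (fun j => P j ω) i 0, fun j => X j ω)
          then ihwcInvCount I fold w α τ (update (fun j => P j ω) i 0, fun j => X j ω)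
          else 0) ∂μ := by
  refine (lintegral_mono fun ω => ofReal_fdp_le_sum_update_zero hα hτ (fun j => hW j ω) s).trans
    (lintegral_finsetSum _ fun i _ => Measurable.ite ?_ ?_ measurable_const).le
  · exact measurableSet_le (hP i)
      ((measurable_ihwcThreshold hw i).comp (measurable_update_zero hP hX i))
  · exact (measurable_ihwcInvCount hw).comp (measurable_update_zero hP hX i)

lemma lintegral_ite_ihwcThreshold_update_zero_le [IsProbabilityMeasure μ]
    (hP : ∀ j, Measurable (P j)) (hX : ∀ j, Measurable (X j)) (hw : ∀ l, Measurable (w l))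
    (hα : 0 ≤ α) (hτ : τ ≤ 1) (hi : i ∈ I (fold i))
    (hindep : IndepFun (P i) (fun ω => (update (fun j => P j ω) i 0, fun j => X j ω)) μ)
    (hsuper : ∀ t ∈ Set.Icc (0 : ℝ) 1, μ {ω | P i ω ≤ t} ≤ ENNReal.ofReal t)
    (hW : ∀ ω, 0 ≤ crossWeights I fold w τ (fun j => P j ω, fun j => X j ω) i) :
    ∫⁻ ω, (if P i ω ≤ ihwcThreshold I fold w α τ i (update (fun j => P j ω) i 0, fun j => X j ω)
        then ihwcInvCount I fold w α τ (update (fun j => P j ω) i 0, fun j => X j ω) else 0) ∂μ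
      ≤ ∫⁻ ω, ENNReal.ofReal
          (α * crossWeights I fold w τ (fun j => P j ω, fun j => X j ω) i / m) ∂μ := by
  refine (lintegral_ite_le_of_indepFun (hP i) (measurable_update_zero hP hX i)
    (measurable_ihwcThreshold hw i) (measurable_ihwcInvCount hw) hindep
    fun z => measure_le_le_ofReal_of_le_one hsuper ((min_le_right _ _).trans hτ)).trans
    (lintegral_mono fun ω => ?_)
  have hWi := crossWeights_update_self (p := fun j => P j ω) (x := fun j => X j ω) (w := w)
    (τ := τ) hi 0
  exact hWi ▸ ofReal_cBHThreshold_mul_le hα (hWi ▸ hW ω)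

end IHWc

open IHWc

theorem ihwc_fdr_control_general
    {Ω : Type*} [MeasurableSpace Ω] (μ : Measure Ω) [IsProbabilityMeasure μ]
    (m K : ℕ) (hm : 0 < m) (I : Fin K → Finset (Fin m))
    (hpart : ∀ i : Fin m, ∃! l : Fin K, i ∈ I l)
    (H0 : Finset (Fin m))
    (P X W : Fin m → Ω → ℝ)
    (hPmeas : ∀ i, Measurable (P i)) (hXmeas : ∀ i, Measurable (X i))
    -- Assumption 2(a): null pairs are jointly independent
    (hnull_indep : iIndepFun
      (fun (i : {i : Fin m // i ∈ H0}) (ω : Ω) => (P i ω, X i ω)) μ)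
    -- Assumption 2(b): null pairs are independent of alternative pairs
    (hnull_alt_indep : IndepFun
      (fun ω => fun i : {i : Fin m // i ∈ H0} => (P i ω, X i ω))
      (fun ω => fun i : {i : Fin m // i ∉ H0} => (P i ω, X i ω)) μ)
    -- Assumption 2(c): for nulls, `P i ⊥ X i`
    (hPX_indep : ∀ i ∈ H0, IndepFun (P i) (X i) μ)
    -- Assumption 2(d): null p-values are super-uniform
    (hsuper : ∀ i ∈ H0, ∀ t ∈ Set.Icc (0 : ℝ) 1,
      μ {ω | P i ω ≤ t} ≤ ENNReal.ofReal t)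
    (α τ : ℝ) (hα : α ∈ Set.Ioo (0 : ℝ) 1) (hτ : τ ∈ Set.Ioo (0 : ℝ) 1)
    -- IHWc cross-weighting: fold-`l` weights are a measurable function of the censored
    -- out-of-fold p-values and of all covariates
    (w : Fin K → (Fin m → ℝ) × (Fin m → ℝ) → Fin m → ℝ)
    (hwmeas : ∀ l, Measurable (w l))
    (hWdef : ∀ l : Fin K, ∀ i ∈ I l, ∀ ω,
      W i ω = w l
        (fun j => if j ∈ I l then 0 else censor m τ (fun j' => P j' ω) j,
          fun j => X j ω) i)
    (hWnonneg : ∀ i ω, 0 ≤ W i ω)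
    (hWsum : ∀ᵐ ω ∂μ, ∑ i, W i ω = (m : ℝ)) :
    ∫ ω,
      (((H0.filter
          (fun i => cBHRejects m (fun j => P j ω) (fun j => W j ω) α τ i)).card : ℝ)
        / max (cBHRejCount m (fun j => P j ω) (fun j => W j ω) α τ) 1) ∂μ ≤ α := by
  obtain ⟨hα0, -⟩ := hα
  obtain ⟨hτ0, hτ1⟩ := hτ
  choose fold hfold using fun i => (hpart i).exists
  have hW : ∀ ω, (fun j => W j ω) = crossWeights I fold w τ (fun j => P j ω, fun j => X j ω) :=
    fun ω => funext fun j => hWdef (fold j) j (hfold j) ω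
  have hWmeas : ∀ i, Measurable (W i) := fun i => by
    have hWi : W i = fun ω => crossWeights I fold w τ (_, _) i := funext fun ω => congrFun (hW ω) i
    rw [hWi]
    exact (measurable_pi_apply i).comp ((measurable_crossWeights hwmeas).comp
      ((measurable_pi_lambda _ hPmeas).prodMk (measurable_pi_lambda _ hXmeas)))
  have hcw_nonneg : ∀ j ω, 0 ≤ crossWeights I fold w τ (fun j => P j ω, fun j => X j ω) j :=
    fun j ω => hW ω ▸ hWnonneg j ω
  refine integral_le_of_lintegral_ofReal_le (fun ω => by positivity) hα0.le ?_
  simp only [hW]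
  calc _ ≤ _ := lintegral_ofReal_fdp_le_sum_lintegral_update_zero hPmeas hXmeas hwmeas hα0.le
        hτ0.le hcw_nonneg H0
    _ ≤ ∑ i ∈ H0, ∫⁻ ω, ENNReal.ofReal (α * W i ω / m) ∂μ := Finset.sum_le_sum fun i hi => by
        simpa only [← hW] using lintegral_ite_ihwcThreshold_update_zero_le hPmeas hXmeas hwmeas
          hα0.le hτ1.le (hfold i) (indepFun_update_zero_of_mem_null hi hPmeas hXmeas hnull_indep
            hnull_alt_indep (hPX_indep i hi)) (hsuper i hi) (hcw_nonneg i)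
    _ ≤ ENNReal.ofReal α := sum_lintegral_ofReal_weight_le hm hWmeas hWnonneg hWsum hα0.le H0

/-- **IHWc FDR control (Theorem 2).**
Under Assumption 2 — the null (p-value, covariate) pairs are jointly independent,
independent of the alternative pairs, with `P i ⊥ X i` and super-uniform `P i` for each
null `i` — the IHWc procedure with censoring level `τ ∈ (0,1)` and cross-weights learned
on each fold from the censored out-of-fold p-values and the covariates, nonnegative and
summing to `m` almost surely, controls the FDR at level `α`. -/
theorem ihwc_fdr_control
    {Ω : Type*} [MeasurableSpace Ω] (μ : Measure Ω) [IsProbabilityMeasure μ]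
    (m K : ℕ) (hm : 0 < m) (I : Fin K → Finset (Fin m))
    (hpart : ∀ i : Fin m, ∃! l : Fin K, i ∈ I l)
    (H0 : Finset (Fin m))
    (P X W : Fin m → Ω → ℝ)
    (hPmeas : ∀ i, Measurable (P i)) (hXmeas : ∀ i, Measurable (X i))
    (hWmeas : ∀ i, Measurable (W i))
    -- Assumption 2(a): null pairs are jointly independent
    (hnull_indep : iIndepFun
      (fun (i : {i : Fin m // i ∈ H0}) (ω : Ω) => (P i ω, X i ω)) μ)
    -- Assumption 2(b): null pairs are independent of alternative pairs
    (hnull_alt_indep : IndepFun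
      (fun ω => fun i : {i : Fin m // i ∈ H0} => (P i ω, X i ω))
      (fun ω => fun i : {i : Fin m // i ∉ H0} => (P i ω, X i ω)) μ)
    -- Assumption 2(c): for nulls, `P i ⊥ X i`
    (hPX_indep : ∀ i ∈ H0, IndepFun (P i) (X i) μ)
    -- Assumption 2(d): null p-values are super-uniform
    (hsuper : ∀ i ∈ H0, ∀ t ∈ Set.Icc (0 : ℝ) 1,
      μ {ω | P i ω ≤ t} ≤ ENNReal.ofReal t)
    (α τ : ℝ) (hα : α ∈ Set.Ioo (0 : ℝ) 1) (hτ : τ ∈ Set.Ioo (0 : ℝ) 1)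
    -- IHWc cross-weighting: fold-`l` weights are a measurable function of the censored
    -- out-of-fold p-values and of all covariates
    (w : Fin K → (Fin m → ℝ) × (Fin m → ℝ) → Fin m → ℝ)
    (hwmeas : ∀ l, Measurable (w l))
    (hWdef : ∀ l : Fin K, ∀ i ∈ I l, ∀ ω,
      W i ω = w l
        (fun j => if j ∈ I l then 0 else censor m τ (fun j' => P j' ω) j,
          fun j => X j ω) i)
    (hWnonneg : ∀ i ω, 0 ≤ W i ω)
    (hWsum : ∀ᵐ ω ∂μ, ∑ i, W i ω = (m : ℝ)) :
    ∫ ω,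
      (((H0.filter
          (fun i => cBHRejects m (fun j => P j ω) (fun j => W j ω) α τ i)).card : ℝ)
        / max (cBHRejCount m (fun j => P j ω) (fun j => W j ω) α τ) 1) ∂μ ≤ α :=
  ihwc_fdr_control_general μ m K hm I hpart H0 P X W hPmeas hXmeas hnull_indep hnull_alt_indep
    hPX_indep hsuper α τ hα hτ w hwmeas hWdef hWnonneg hWsum
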